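/- arXiv:1206.3713 — 6 statements merged into one kernel-verified Lean document; each statement's English description precedes it below -/
import Mathlib

section
/- Let G1 and G2 be two non-trivial games on n binary players and let q satisfy max(π(G1), π(G2)) < q < 1. Then NE(G1) = NE(G2) if and only if p_{(G1,q)}(x) = p_{(G2,q)}(x) for every x ∈ {−1,+1}^n. -/
open Finset
open scoped Classical BigOperators

/-- The hypercube `{-1,+1}^n` of joint actions, as a finite set of real vectors. -/
noncomputable def cube (n : ℕ) : Finset (Fin n → ℝ) :=
  (Finset.univ : Finset (Fin n → Bool)).image (fun s i => if s i then (1 : ℝ) else -1)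

/-- The generative-model PMF `p_{(N,q)}(x) = q·1[x∈N]/|N| + (1−q)·1[x∉N]/(2^n − |N|)`. -/
noncomputable def gpmf (n : ℕ) (N : Finset (Fin n → ℝ)) (q : ℝ) (x : Fin n → ℝ) : ℝ :=
  q * (if x ∈ N then 1 else 0) / (N.card : ℝ) +
    (1 - q) * (if x ∉ N then 1 else 0) / ((2 : ℝ) ^ n - (N.card : ℝ))

/-- two non-trivial games are equivalent (same PSNE set) iff they induce the
same PMF on `{-1,+1}^n`, provided `max(π(G1),π(G2)) < q < 1`. -/
theorem stmt1 (n : ℕ) (N1 N2 : Finset (Fin n → ℝ))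
    (hsub1 : N1 ⊆ cube n) (hsub2 : N2 ⊆ cube n)
    (hpos1 : 0 < N1.card) (hlt1 : N1.card < 2 ^ n)
    (hpos2 : 0 < N2.card) (hlt2 : N2.card < 2 ^ n)
    (q : ℝ) (hq : max ((N1.card : ℝ) / 2 ^ n) ((N2.card : ℝ) / 2 ^ n) < q) (hq1 : q < 1) :
    N1 = N2 ↔ ∀ x ∈ cube n, gpmf n N1 q x = gpmf n N2 q x := by
  constructor
  · rintro rfl x hx; rfl
  · intro h
    have h2n : (0:ℝ) < 2 ^ n := by positivity
    have hl2n : ((2:ℝ)) ^ n = ((2 ^ n : ℕ) : ℝ) := by push_cast; ring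
    have hk1 : (N1.card : ℝ) < q * 2 ^ n := by
      have := lt_of_le_of_lt (le_max_left _ _) hq
      rwa [div_lt_iff₀ h2n] at this
    have hk2 : (N2.card : ℝ) < q * 2 ^ n := by
      have := lt_of_le_of_lt (le_max_right _ _) hq
      rwa [div_lt_iff₀ h2n] at this
    have key : ∀ (A B : Finset (Fin n → ℝ)), (0:ℝ) < A.card →
        (A.card : ℝ) < q * 2 ^ n → (B.card : ℝ) < 2 ^ n → (B.card : ℝ) < q * 2 ^ n →
        ∀ x, x ∈ A → x ∉ B → gpmf n A q x ≠ gpmf n B q x := by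
      intro A B hA hAq hB hBq x hxA hxB
      have hBpos : (0:ℝ) < 2 ^ n - (B.card : ℝ) := by linarith
      have e1 : gpmf n A q x = q / A.card := by
        simp [gpmf, hxA]
      have e2 : gpmf n B q x = (1 - q) / (2 ^ n - (B.card : ℝ)) := by
        simp [gpmf, hxB]
      rw [e1, e2]
      have h1 : (1:ℝ) / 2 ^ n < q / A.card := by
        rw [div_lt_div_iff₀ h2n hA]; linarith
      have h2 : (1 - q) / (2 ^ n - (B.card : ℝ)) < 1 / 2 ^ n := by
        rw [div_lt_div_iff₀ hBpos h2n]; nlinarith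
      linarith
    have hc1 : (0:ℝ) < N1.card := by exact_mod_cast hpos1
    have hc2 : (0:ℝ) < N2.card := by exact_mod_cast hpos2
    have hl1 : (N1.card : ℝ) < 2 ^ n := by rw [hl2n]; exact_mod_cast hlt1
    have hl2 : (N2.card : ℝ) < 2 ^ n := by rw [hl2n]; exact_mod_cast hlt2
    ext x
    constructor
    · intro hx1
      by_contra hx2
      exact key N1 N2 hc1 hk1 hl2 hk2 x hx1 hx2 (h x (hsub1 hx1))
    · intro hx2
      by_contra hx1
      exact key N2 N1 hc2 hk2 hl1 hk1 x hx2 hx1 (h x (hsub2 hx2)).symm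
end

section
/- Let G be a non-trivial game on n binary players, 0 < q < 1, and D = x^{(1)},…,x^{(m)} a dataset of joint actions. Then the average log-likelihood satisfies L̂(G,q) = (1/m)∑_l log p_{(G,q)}(x^{(l)}) = KL(π̂(G)‖π(G)) − KL(π̂(G)‖q) − n·log 2 (with the convention 0·log 0 = 0 in the Bernoulli KL). Moreover, if 0 < π̂(G) < 1, then over q ∈ (0,1) the function q ↦ L̂(G,q) is maximized exactly at q = π̂(G). -/
open Finset
open scoped Classical BigOperators

/-- KL divergence between Bernoulli distributions (with `0 · log 0 = 0`, which holds
automatically since `Real.log 0 = 0`). -/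
noncomputable def klBer (p1 p2 : ℝ) : ℝ :=
  p1 * Real.log (p1 / p2) + (1 - p1) * Real.log ((1 - p1) / (1 - p2))

/-- Empirical proportion of equilibria `π̂(G) = (1/m) ∑_l 1[x^{(l)} ∈ NE(G)]`. -/
noncomputable def piHat (n m : ℕ) (N : Finset (Fin n → ℝ)) (xs : Fin m → Fin n → ℝ) : ℝ :=
  (1 / (m : ℝ)) * ∑ l, (if xs l ∈ N then 1 else 0)

/-- Average log-likelihood `L̂(G,q) = (1/m) ∑_l log p_{(G,q)}(x^{(l)})`. -/
noncomputable def avgLL (n m : ℕ) (N : Finset (Fin n → ℝ)) (q : ℝ)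
    (xs : Fin m → Fin n → ℝ) : ℝ :=
  (1 / (m : ℝ)) * ∑ l, Real.log (gpmf n N q (xs l))

/-!
The model density takes only two values, `q / |NE|` on equilibria and `(1 - q) / (2^n - |NE|)`
off them, so `L̂(G,q)` is the Bernoulli log-likelihood
`π̂ log (q / |NE|) + (1 - π̂) log ((1 - q) / (2^n - |NE|))`; writing `|NE| = π 2^n` turns it into
`KL(π̂‖π) − KL(π̂‖q) − n log 2`. Maximality is Gibbs' inequality in the form
`KL(p‖q) = q f(p/q) + (1 - q) f((1 - p)/(1 - q))` with `f x = x log x + 1 - x ≥ 0`, which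
vanishes only at `x = 1`.
-/

open Real InformationTheory

lemma mul_log_div_sub_mul_log_div (p : ℝ) {q r : ℝ} (hq : q ≠ 0) (hr : r ≠ 0) :
    p * log (p / r) - p * log (p / q) = p * log (q / r) := by
  rcases eq_or_ne p 0 with rfl | hp
  · simp
  rw [← mul_sub, ← log_div (div_ne_zero hp hr) (div_ne_zero hp hq)]
  congr 2
  field_simp

lemma klBer_sub_klBer (p : ℝ) {q r : ℝ} (hq0 : q ≠ 0) (hq1 : q ≠ 1) (hr0 : r ≠ 0) (hr1 : r ≠ 1) :
    klBer p r - klBer p q = p * log (q / r) + (1 - p) * log ((1 - q) / (1 - r)) := by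
  have h1q : 1 - q ≠ 0 := sub_ne_zero.mpr hq1.symm
  have h1r : 1 - r ≠ 0 := sub_ne_zero.mpr hr1.symm
  rw [← mul_log_div_sub_mul_log_div p hq0 hr0, ← mul_log_div_sub_mul_log_div (1 - p) h1q h1r,
    klBer, klBer]
  ring

lemma klBer_self (p : ℝ) : klBer p p = 0 := by
  simp [klBer]

lemma klBer_eq_klFun (p : ℝ) {q : ℝ} (hq0 : q ≠ 0) (hq1 : q ≠ 1) :
    klBer p q = q * klFun (p / q) + (1 - q) * klFun ((1 - p) / (1 - q)) := by
  have h1q : 1 - q ≠ 0 := sub_ne_zero.mpr hq1.symm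
  simp only [klBer, klFun]
  field_simp
  ring

lemma klBer_nonneg {p q : ℝ} (hp0 : 0 ≤ p) (hp1 : p ≤ 1) (hq0 : 0 < q) (hq1 : q < 1) :
    0 ≤ klBer p q := by
  rw [klBer_eq_klFun p hq0.ne' hq1.ne]
  have h1q : 0 < 1 - q := by linarith
  have h1p : 0 ≤ 1 - p := by linarith
  exact add_nonneg (mul_nonneg hq0.le (klFun_nonneg (by positivity)))
    (mul_nonneg h1q.le (klFun_nonneg (by positivity)))

lemma eq_of_klBer_eq_zero {p q : ℝ} (hp0 : 0 ≤ p) (hp1 : p ≤ 1) (hq0 : 0 < q) (hq1 : q < 1)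
    (h : klBer p q = 0) : p = q := by
  rw [klBer_eq_klFun p hq0.ne' hq1.ne] at h
  have h1q : 0 < 1 - q := by linarith
  have h1p : 0 ≤ 1 - p := by linarith
  have hfst : 0 ≤ q * klFun (p / q) := mul_nonneg hq0.le (klFun_nonneg (by positivity))
  have hsnd : 0 ≤ (1 - q) * klFun ((1 - p) / (1 - q)) :=
    mul_nonneg h1q.le (klFun_nonneg (by positivity))
  have hkl : klFun (p / q) = 0 := by
    simpa [hq0.ne'] using (add_eq_zero_iff_of_nonneg hfst hsnd).mp h |>.1
  rw [klFun_eq_zero_iff (by positivity), div_eq_one_iff_eq hq0.ne'] at hkl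
  exact hkl

lemma mul_log_add_mul_log_eq_klBer_sub (p : ℝ) {q A T : ℝ} (hA : 0 < A) (hAT : A < T)
    (hq0 : 0 < q) (hq1 : q < 1) :
    p * log (q / A) + (1 - p) * log ((1 - q) / (T - A)) =
      klBer p (A / T) - klBer p q - log T := by
  have hT : 0 < T := hA.trans hAT
  have hTA : 0 < T - A := by linarith
  have hr1 : A / T ≠ 1 := ((div_lt_one hT).mpr hAT).ne
  have h1q : 1 - q ≠ 0 := by linarith
  have hq : q / (A / T) = T * (q / A) := by field_simp
  have hr : (1 - q) / (1 - A / T) = T * ((1 - q) / (T - A)) := by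
    field_simp
  rw [klBer_sub_klBer p hq0.ne' hq1.ne (by positivity) hr1, hq, hr,
    log_mul hT.ne' (by positivity), log_mul hT.ne' (div_ne_zero h1q hTA.ne')]
  ring

lemma ite_eq_indicator_mul_add (P : Prop) [Decidable P] (a b : ℝ) :
    (if P then a else b) = (if P then 1 else 0) * a + (1 - if P then 1 else 0) * b := by
  split_ifs <;> ring

lemma log_gpmf (n : ℕ) (N : Finset (Fin n → ℝ)) (q : ℝ) (x : Fin n → ℝ) :
    log (gpmf n N q x) =
      if x ∈ N then log (q / N.card) else log ((1 - q) / (2 ^ n - N.card)) := by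
  by_cases h : x ∈ N <;> simp [gpmf, h]

lemma avgLL_eq (n : ℕ) {m : ℕ} (hm : m ≠ 0) (N : Finset (Fin n → ℝ)) (q : ℝ)
    (xs : Fin m → Fin n → ℝ) :
    avgLL n m N q xs = piHat n m N xs * log (q / N.card) +
      (1 - piHat n m N xs) * log ((1 - q) / (2 ^ n - N.card)) := by
  simp only [avgLL, piHat, log_gpmf]
  simp_rw [ite_eq_indicator_mul_add (_ ∈ N) (log _)]
  rw [Finset.sum_add_distrib, ← Finset.sum_mul, ← Finset.sum_mul, Finset.sum_sub_distrib]
  simp only [Finset.sum_const, Finset.card_univ, Fintype.card_fin, nsmul_eq_mul, mul_one]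
  field_simp

theorem stmt2_general (n m : ℕ) (hm : 1 ≤ m) (N : Finset (Fin n → ℝ))
    (hpos : 0 < N.card) (hlt : N.card < 2 ^ n)
    (xs : Fin m → Fin n → ℝ) :
    (∀ q : ℝ, 0 < q → q < 1 →
      avgLL n m N q xs =
        klBer (piHat n m N xs) ((N.card : ℝ) / 2 ^ n) - klBer (piHat n m N xs) q -
          (n : ℝ) * Real.log 2) ∧
    (0 < piHat n m N xs → piHat n m N xs < 1 →
      ∀ q : ℝ, 0 < q → q < 1 →
        avgLL n m N q xs ≤ avgLL n m N (piHat n m N xs) xs ∧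
          (avgLL n m N q xs = avgLL n m N (piHat n m N xs) xs → q = piHat n m N xs)) := by
  have hA : (0 : ℝ) < N.card := by exact_mod_cast hpos
  have hAT : (N.card : ℝ) < 2 ^ n := by exact_mod_cast hlt
  have hL (q : ℝ) (hq0 : 0 < q) (hq1 : q < 1) :
      avgLL n m N q xs = klBer (piHat n m N xs) ((N.card : ℝ) / 2 ^ n) -
        klBer (piHat n m N xs) q - n * log 2 := by
    rw [avgLL_eq n (by omega) N q xs, mul_log_add_mul_log_eq_klBer_sub _ hA hAT hq0 hq1,
      log_pow]
  refine ⟨hL, fun hp0 hp1 q hq0 hq1 => ?_⟩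
  rw [hL q hq0 hq1, hL _ hp0 hp1, klBer_self]
  exact ⟨by linarith [klBer_nonneg hp0.le hp1.le hq0 hq1],
    fun h => (eq_of_klBer_eq_zero hp0.le hp1.le hq0 hq1 (by linarith)).symm⟩

/-- the average log-likelihood equals
`KL(π̂‖π) − KL(π̂‖q) − n log 2`, and if `0 < π̂ < 1` then over `q ∈ (0,1)` it is
maximized exactly at `q = π̂`. -/
theorem stmt2 (n m : ℕ) (hm : 1 ≤ m) (N : Finset (Fin n → ℝ)) (hsub : N ⊆ cube n)
    (hpos : 0 < N.card) (hlt : N.card < 2 ^ n)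
    (xs : Fin m → Fin n → ℝ) (hxs : ∀ l, xs l ∈ cube n) :
    (∀ q : ℝ, 0 < q → q < 1 →
      avgLL n m N q xs =
        klBer (piHat n m N xs) ((N.card : ℝ) / 2 ^ n) - klBer (piHat n m N xs) q -
          (n : ℝ) * Real.log 2) ∧
    (0 < piHat n m N xs → piHat n m N xs < 1 →
      ∀ q : ℝ, 0 < q → q < 1 →
        avgLL n m N q xs ≤ avgLL n m N (piHat n m N xs) xs ∧
          (avgLL n m N q xs = avgLL n m N (piHat n m N xs) xs → q = piHat n m N xs)) :=
  stmt2_general n m hm N hpos hlt xs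
end

section
/- Let 0 < π < π̂ ≤ 1 be real numbers. Then −π̂·log π − log 2 < KL(π̂‖π) ≤ −π̂·log π, where the right inequality is strict whenever π̂ < 1 and is an equality when π̂ = 1. -/
/-! Write `KL(q‖p) + q log p = q log q + (1 - q) log ((1 - q)/(1 - p))`. For `p < q < 1` both
terms on the right are negative, which gives the upper bound. Splitting the last logarithm
instead gives `KL(q‖p) + q log p = -H(q) - (1 - q) log (1 - p)` with `H` the binary entropy;
since `H ≤ log 2` and `log (1 - p) < 0`, this gives the lower bound. At `q = 1` everything
collapses to `KL(1‖p) = -log p`. -/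

open Real

lemma mul_log_div_eq_sub (x : ℝ) {y : ℝ} (hy : y ≠ 0) :
    x * log (x / y) = x * log x - x * log y := by
  rcases eq_or_ne x 0 with rfl | hx
  · simp
  · rw [log_div hx hy, mul_sub]

lemma klBer_eq_mul_log_add (q : ℝ) {p : ℝ} (hp : p ≠ 0) :
    klBer q p = -q * log p + q * log q + (1 - q) * log ((1 - q) / (1 - p)) := by
  rw [klBer, mul_log_div_eq_sub q hp]
  ring

lemma klBer_eq_neg_binEntropy (q : ℝ) {p : ℝ} (hp₀ : p ≠ 0) (hp₁ : p ≠ 1) :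
    klBer q p = -q * log p - binEntropy q - (1 - q) * log (1 - p) := by
  rw [klBer, mul_log_div_eq_sub q hp₀, mul_log_div_eq_sub (1 - q) (sub_ne_zero.2 hp₁.symm),
    binEntropy, log_inv, log_inv]
  ring

lemma klBer_one_left (p : ℝ) : klBer 1 p = -log p := by
  simp [klBer]

lemma neg_mul_log_sub_log_two_lt_klBer {p q : ℝ} (hp₀ : 0 < p) (hp₁ : p < 1) (hq : q < 1) :
    -q * log p - log 2 < klBer q p := by
  rw [klBer_eq_neg_binEntropy q hp₀.ne' hp₁.ne]
  have : (1 - q) * log (1 - p) < 0 :=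
    mul_neg_of_pos_of_neg (by linarith) (log_neg (by linarith) (by linarith))
  linarith [binEntropy_le_log_two (p := q)]

lemma klBer_lt_neg_mul_log {p q : ℝ} (hp : 0 < p) (hpq : p < q) (hq : q < 1) :
    klBer q p < -q * log p := by
  rw [klBer_eq_mul_log_add q hp.ne']
  have hq_log : q * log q < 0 := mul_log_neg (hp.trans hpq) hq
  have h_ratio : (1 - q) * log ((1 - q) / (1 - p)) < 0 :=
    mul_neg_of_pos_of_neg (by linarith)
      (log_neg (div_pos (by linarith) (by linarith)) ((div_lt_one (by linarith)).2 (by linarith)))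
  linarith

/-- for `0 < p < ph ≤ 1`,
`−ph·log p − log 2 < KL(ph‖p) ≤ −ph·log p`, with the right inequality strict when
`ph < 1` and an equality when `ph = 1`. -/
theorem stmt7 (p ph : ℝ) (h0 : 0 < p) (h1 : p < ph) (h2 : ph ≤ 1) :
    (-ph * Real.log p - Real.log 2 < klBer ph p) ∧
    (klBer ph p ≤ -ph * Real.log p) ∧
    (ph < 1 → klBer ph p < -ph * Real.log p) ∧
    (ph = 1 → klBer ph p = -ph * Real.log p) := by
  rcases h2.lt_or_eq with hph | rfl
  · have upper := klBer_lt_neg_mul_log h0 h1 hph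
    exact ⟨neg_mul_log_sub_log_two_lt_klBer h0 (h1.trans hph) hph, upper.le, fun _ => upper,
      fun h => absurd h hph.ne⟩
  · rw [klBer_one_left]
    exact ⟨by linarith [log_pos one_lt_two], by rw [neg_one_mul], fun h => absurd h (lt_irrefl 1),
      fun _ => by rw [neg_one_mul]⟩
end

section
/- Fix n ≥ 2, a player index i, samples x^{(1)},…,x^{(m)} ∈ {−1,+1}^n, and constants c^{(1)},…,c^{(m)} ≥ 0. Define the hinge training loss ℓ̂(w,b) = (1/m)·∑_l max( c^{(l)}, 1 − x_i^{(l)}·(wᵀ x_{−i}^{(l)} − b) ) for w ∈ ℝ^{n−1}, b ∈ ℝ. Then (w,b) = (0,0) is a global minimizer of ℓ̂ if and only if there exist u^{(1)},…,u^{(m)} with u^{(l)} = 0 whenever c^{(l)} > 1, u^{(l)} = 1 whenever c^{(l)} < 1, and u^{(l)} ∈ [0,1] whenever c^{(l)} = 1, such that for every j ≠ i, ∑_l 1[x_i^{(l)} x_j^{(l)} = 1]·u^{(l)} = ∑_l 1[x_i^{(l)} x_j^{(l)} = −1]·u^{(l)}, and ∑_l 1[x_i^{(l)} = 1]·u^{(l)}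 = ∑_l 1[x_i^{(l)} = −1]·u^{(l)}. -/
/-!
The loss is a sum of the convex functions `s ↦ max c (1 - s)` evaluated at linear forms
`θ ↦ a_l ⬝ᵥ θ` of the parameters. Along any direction `θ`, each summand is affine near `0` with slope
`-u_l (a_l ⬝ᵥ θ)` for some admissible multiplier `u_l`, so minimality at `0` gives, for every `θ`, an
admissible `u` with `(∑ u_l a_l) ⬝ᵥ θ ≤ 0`. The vectors `∑ u_l a_l` over admissible `u` form a compact
convex set, and Hahn–Banach then puts `0` in it. Conversely, summing the subgradient inequalities
`max c 1 - u t ≤ max c (1 - t)` shows that `∑ u_l a_l = 0` makes `0` a minimizer. For the hinge loss,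
`a_l = x_i^{(l)} (x_{-i}^{(l)}, 1)`, and the balance conditions are the coordinates of `∑ u_l a_l = 0`.
-/

open Finset
open scoped Classical BigOperators

/-- The hinge training loss
`ℓ̂(w,b) = (1/m) ∑_l max(c^{(l)}, 1 − x_i^{(l)}(wᵀ x_{−i}^{(l)} − b))`, where the weight
vector `w ∈ ℝ^{n−1}` is indexed by the players `j ≠ i`. -/
noncomputable def hingeObj (n m : ℕ) (i : Fin n) (xs : Fin m → Fin n → ℝ) (c : Fin m → ℝ)
    (w : {j : Fin n // j ≠ i} → ℝ) (b : ℝ) : ℝ :=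
  (1 / (m : ℝ)) *
    ∑ l, max (c l) (1 - xs l i * ((∑ j : {j : Fin n // j ≠ i}, w j * xs l (j : Fin n)) - b))

open Filter Topology

/-- `-u` is a subgradient of `s ↦ max c (1 - s)` at `s = 0`. -/
def HingeMultiplier (c u : ℝ) : Prop :=
  (1 < c → u = 0) ∧ (c < 1 → u = 1) ∧ (c = 1 → 0 ≤ u ∧ u ≤ 1)

theorem setOf_hingeMultiplier (c : ℝ) :
    {u | HingeMultiplier c u} = Set.Icc (if c < 1 then 1 else 0) (if 1 < c then 0 else 1) := by
  ext u
  change HingeMultiplier c u ↔ _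
  rcases lt_trichotomy c 1 with h | rfl | h
  · simp [HingeMultiplier, h, h.ne, not_lt.2 h.le, le_antisymm_iff, and_comm]
  · simp [HingeMultiplier]
  · simp [HingeMultiplier, h, h.ne', not_lt.2 h.le, le_antisymm_iff, and_comm]

theorem HingeMultiplier.max_one_sub_mul_le {c u : ℝ} (hu : HingeMultiplier c u) (t : ℝ) :
    max c 1 - u * t ≤ max c (1 - t) := by
  obtain ⟨hgt, hlt, heq⟩ := hu
  rcases lt_trichotomy c 1 with h | rfl | h
  · simp [hlt h, h.le]
  · obtain ⟨hu0, hu1⟩ := heq rfl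
    rw [max_self]
    rcases le_total 0 t with ht | ht
    · nlinarith [le_max_left (1 : ℝ) (1 - t)]
    · nlinarith [le_max_right (1 : ℝ) (1 - t)]
  · simp [hgt h, h.le]

theorem exists_hingeMultiplier_eventually_max_eq (c t : ℝ) :
    ∃ u, HingeMultiplier c u ∧ ∀ᶠ ε in 𝓝[>] (0 : ℝ), max c (1 - ε * t) = max c 1 - ε * (u * t) := by
  have hcont : Continuous fun ε : ℝ => 1 - ε * t := by fun_prop
  have hlim : Tendsto (fun ε : ℝ => 1 - ε * t) (𝓝[>] 0) (𝓝 1) :=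
    tendsto_nhdsWithin_of_tendsto_nhds (hcont.tendsto' 0 1 (by simp))
  rcases lt_trichotomy c 1 with h | rfl | h
  · refine ⟨1, ⟨fun h' => absurd h' (not_lt.2 h.le), fun _ => rfl, fun _ => by norm_num⟩, ?_⟩
    filter_upwards [hlim.eventually_const_lt h] with ε hε
    rw [max_eq_right hε.le, max_eq_right h.le, one_mul]
  · refine ⟨if t < 0 then 1 else 0, ⟨by simp, by simp, fun _ => by split_ifs <;> norm_num⟩, ?_⟩
    filter_upwards [self_mem_nhdsWithin] with ε (hε : 0 < ε)
    split_ifs with ht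
    · rw [max_eq_right (by nlinarith), max_self]; ring
    · rw [max_eq_left (by nlinarith), max_self]; ring
  · refine ⟨0, ⟨fun _ => rfl, fun h' => absurd h' (not_lt.2 h.le), fun _ => by norm_num⟩, ?_⟩
    filter_upwards [hlim.eventually_lt_const h] with ε hε
    rw [max_eq_left hε.le, max_eq_left h.le]
    ring

section HingeSum

variable {ι κ : Type*} [Fintype ι] [Fintype κ]

theorem zero_mem_of_forall_exists_dotProduct_nonpos {K : Set (ι → ℝ)} (hconv : Convex ℝ K)
    (hclosed : IsClosed K) (h : ∀ θ, ∃ k ∈ K, k ⬝ᵥ θ ≤ 0) : 0 ∈ K := by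
  by_contra h0
  obtain ⟨f, r, hf0, hfK⟩ := geometric_hahn_banach_point_closed hconv hclosed h0
  obtain ⟨k, hk, hkθ⟩ := h fun i => f fun j => if i = j then 1 else 0
  have hf : f k = k ⬝ᵥ fun i => f fun j => if i = j then 1 else 0 := by
    rw [← f.coe_coe, LinearMap.pi_apply_eq_sum_univ]
    rfl
  have := hfK k hk
  rw [map_zero] at hf0
  linarith

theorem exists_hingeMultiplier_sum_mul_nonpos {a : κ → ι → ℝ} {c : κ → ℝ}
    (hmin : ∀ θ, ∑ l, max (c l) 1 ≤ ∑ l, max (c l) (1 - a l ⬝ᵥ θ)) (θ : ι → ℝ) :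
    ∃ u : κ → ℝ, (∀ l, HingeMultiplier (c l) (u l)) ∧ ∑ l, u l * (a l ⬝ᵥ θ) ≤ 0 := by
  choose u hu hev using fun l => exists_hingeMultiplier_eventually_max_eq (c l) (a l ⬝ᵥ θ)
  obtain ⟨ε, hε, hεeq⟩ :=
    ((eventually_mem_nhdsWithin (s := Set.Ioi (0 : ℝ))).and (eventually_all.2 hev)).exists
  refine ⟨u, hu, nonpos_of_mul_nonpos_right ?_ hε⟩
  have := hmin (ε • θ)
  simp only [dotProduct_smul, smul_eq_mul, hεeq, sum_sub_distrib, ← mul_sum] at this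
  linarith

theorem forall_sum_max_le_iff (a : κ → ι → ℝ) (c : κ → ℝ) :
    (∀ θ, ∑ l, max (c l) 1 ≤ ∑ l, max (c l) (1 - a l ⬝ᵥ θ)) ↔
      ∃ u : κ → ℝ, (∀ l, HingeMultiplier (c l) (u l)) ∧ ∑ l, u l • a l = 0 := by
  set S : Set (κ → ℝ) := Set.univ.pi fun l => {v | HingeMultiplier (c l) v}
  have hS : ∀ u, u ∈ S ↔ ∀ l, HingeMultiplier (c l) (u l) := fun u => Set.mem_univ_pi
  have hdot : ∀ (u : κ → ℝ) (θ : ι → ℝ), (∑ l, u l • a l) ⬝ᵥ θ = ∑ l, u l * (a l ⬝ᵥ θ) :=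
    fun u θ => by simp only [sum_dotProduct, smul_dotProduct, smul_eq_mul]
  constructor
  · intro hmin
    let φ := Fintype.linearCombination ℝ a
    have hSconv : Convex ℝ S := convex_pi fun l _ => by
      rw [setOf_hingeMultiplier]; exact convex_Icc _ _
    have hScpt : IsCompact S := isCompact_univ_pi fun l => by
      rw [setOf_hingeMultiplier]; exact isCompact_Icc
    obtain ⟨u, huS, hu⟩ : (0 : ι → ℝ) ∈ φ '' S := by
      refine zero_mem_of_forall_exists_dotProduct_nonpos (hSconv.linear_image φ)
        (hScpt.image φ.continuous_of_finiteDimensional).isClosed fun θ => ?_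
      obtain ⟨u, hu, hle⟩ := exists_hingeMultiplier_sum_mul_nonpos hmin θ
      exact ⟨φ u, ⟨u, (hS u).2 hu, rfl⟩, by rwa [Fintype.linearCombination_apply, hdot]⟩
    exact ⟨u, (hS u).1 huS, by rwa [Fintype.linearCombination_apply] at hu⟩
  · rintro ⟨u, hu, hsum⟩ θ
    calc ∑ l, max (c l) 1 = ∑ l, (max (c l) 1 - u l * (a l ⬝ᵥ θ)) := by
          rw [sum_sub_distrib, ← hdot, hsum, zero_dotProduct, sub_zero]
      _ ≤ _ := sum_le_sum fun l _ => (hu l).max_one_sub_mul_le _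

end HingeSum

theorem sum_ite_one_eq_sum_ite_neg_one_iff {κ : Type*} [Fintype κ] {s : κ → ℝ}
    (hs : ∀ l, s l = 1 ∨ s l = -1) (u : κ → ℝ) :
    ∑ l, (if s l = 1 then (1 : ℝ) else 0) * u l = ∑ l, (if s l = -1 then (1 : ℝ) else 0) * u l ↔
      ∑ l, u l * s l = 0 := by
  have hsplit : ∀ l, u l * s l =
      (if s l = 1 then (1 : ℝ) else 0) * u l - (if s l = -1 then (1 : ℝ) else 0) * u l := by
    intro l
    rcases hs l with h | h <;> norm_num [h]
  rw [sum_congr rfl fun l _ => hsplit l, sum_sub_distrib, sub_eq_zero]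

section HingeObj

variable {n m : ℕ} (i : Fin n)

/-- The sample `x` seen from player `i`: `(x_i x_j)_{j ≠ i}` extended by `x_i` in the coordinate
`none`, so that its dot product with `o.elim (-b) w` is `x_i (wᵀ x_{-i} - b)`. -/
def labeledFeatures (x : Fin n → ℝ) : Option {j : Fin n // j ≠ i} → ℝ :=
  fun o => x i * o.elim 1 fun j => x j

theorem hingeObj_eq (xs : Fin m → Fin n → ℝ) (c : Fin m → ℝ) (w : {j : Fin n // j ≠ i} → ℝ)
    (b : ℝ) :
    hingeObj n m i xs c w b =
      1 / m * ∑ l, max (c l) (1 - labeledFeatures i (xs l) ⬝ᵥ fun o => o.elim (-b) w) := by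
  unfold hingeObj
  congr 2 with l
  simp only [dotProduct, labeledFeatures, Fintype.sum_option, Option.elim]
  have hsum : ∑ j : {j : Fin n // j ≠ i}, xs l i * xs l j * w j =
      xs l i * ∑ j : {j : Fin n // j ≠ i}, w j * xs l j := by
    rw [mul_sum]
    exact sum_congr rfl fun j _ => by ring
  rw [hsum]
  congr 2
  ring

theorem hingeObj_zero_le_iff (xs : Fin m → Fin n → ℝ) (c : Fin m → ℝ) :
    (∀ w b, hingeObj n m i xs c 0 0 ≤ hingeObj n m i xs c w b) ↔
      ∀ θ, ∑ l, max (c l) 1 ≤ ∑ l, max (c l) (1 - labeledFeatures i (xs l) ⬝ᵥ θ) := by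
  rcases Nat.eq_zero_or_pos m with rfl | hm
  · simp [hingeObj]
  have h0 : (fun o => o.elim (-0) 0 : Option {j : Fin n // j ≠ i} → ℝ) = 0 := by
    funext o; cases o <;> simp
  have hθ : ∀ θ : Option {j : Fin n // j ≠ i} → ℝ,
      (fun o => o.elim (-(-θ none)) fun j => θ (some j)) = θ := by
    intro θ; funext o; cases o <;> simp
  simp only [hingeObj_eq, h0, dotProduct_zero, sub_zero,
    mul_le_mul_iff_of_pos_left (by positivity : (0 : ℝ) < 1 / m)]
  refine ⟨fun h θ => ?_, fun h w b => h _⟩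
  simpa only [hθ] using h (fun j => θ (some j)) (-θ none)

theorem sum_smul_labeledFeatures_eq_zero_iff {xs : Fin m → Fin n → ℝ}
    (hxs : ∀ l j, xs l j = 1 ∨ xs l j = -1) (u : Fin m → ℝ) :
    ∑ l, u l • labeledFeatures i (xs l) = 0 ↔
      (∀ j : Fin n, j ≠ i →
        ∑ l, (if xs l i * xs l j = 1 then (1 : ℝ) else 0) * u l =
          ∑ l, (if xs l i * xs l j = -1 then (1 : ℝ) else 0) * u l) ∧
      ∑ l, (if xs l i = 1 then (1 : ℝ) else 0) * u l =
        ∑ l, (if xs l i = -1 then (1 : ℝ) else 0) * u l := by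
  have hprod : ∀ j l, xs l i * xs l j = 1 ∨ xs l i * xs l j = -1 := fun j l => by
    rcases hxs l i with h | h <;> rcases hxs l j with h' | h' <;> norm_num [h, h']
  rw [funext_iff, Option.forall, and_comm]
  simp only [Finset.sum_apply, Pi.smul_apply, smul_eq_mul, labeledFeatures, Option.elim, mul_one,
    Pi.zero_apply, Subtype.forall]
  rw [sum_ite_one_eq_sum_ite_neg_one_iff (hxs · i)]
  refine Iff.and (forall₂_congr fun j _ => ?_) Iff.rfl
  rw [sum_ite_one_eq_sum_ite_neg_one_iff (hprod j)]

end HingeObj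

theorem stmt10_general (n m : ℕ) (i : Fin n)
    (xs : Fin m → Fin n → ℝ) (hxs : ∀ l j, xs l j = 1 ∨ xs l j = -1)
    (c : Fin m → ℝ) :
    (∀ (w : {j : Fin n // j ≠ i} → ℝ) (b : ℝ),
        hingeObj n m i xs c 0 0 ≤ hingeObj n m i xs c w b) ↔
      ∃ u : Fin m → ℝ,
        (∀ l, 1 < c l → u l = 0) ∧
        (∀ l, c l < 1 → u l = 1) ∧
        (∀ l, c l = 1 → 0 ≤ u l ∧ u l ≤ 1) ∧
        (∀ j : Fin n, j ≠ i →
          ∑ l, (if xs l i * xs l j = 1 then (1 : ℝ) else 0) * u l =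
            ∑ l, (if xs l i * xs l j = -1 then (1 : ℝ) else 0) * u l) ∧
        (∑ l, (if xs l i = 1 then (1 : ℝ) else 0) * u l =
          ∑ l, (if xs l i = -1 then (1 : ℝ) else 0) * u l) := by
  rw [hingeObj_zero_le_iff, forall_sum_max_le_iff]
  refine exists_congr fun u => ?_
  rw [sum_smul_labeledFeatures_eq_zero_iff i hxs]
  simp only [HingeMultiplier, forall_and, and_assoc]

/-- `(w,b) = (0,0)` is a global minimizer of the hinge training loss iff
there exist `u^{(l)}` (with `u = 0` if `c > 1`, `u = 1` if `c < 1`, `u ∈ [0,1]` if `c = 1`)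
balancing the (weighted) agreement/disagreement counts for every `j ≠ i` and for the bias. -/
theorem stmt10 (n m : ℕ) (hn : 2 ≤ n) (i : Fin n)
    (xs : Fin m → Fin n → ℝ) (hxs : ∀ l j, xs l j = 1 ∨ xs l j = -1)
    (c : Fin m → ℝ) (hc : ∀ l, 0 ≤ c l) :
    (∀ (w : {j : Fin n // j ≠ i} → ℝ) (b : ℝ),
        hingeObj n m i xs c 0 0 ≤ hingeObj n m i xs c w b) ↔
      ∃ u : Fin m → ℝ,
        (∀ l, 1 < c l → u l = 0) ∧
        (∀ l, c l < 1 → u l = 1) ∧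
        (∀ l, c l = 1 → 0 ≤ u l ∧ u l ≤ 1) ∧
        (∀ j : Fin n, j ≠ i →
          ∑ l, (if xs l i * xs l j = 1 then (1 : ℝ) else 0) * u l =
            ∑ l, (if xs l i * xs l j = -1 then (1 : ℝ) else 0) * u l) ∧
        (∑ l, (if xs l i = 1 then (1 : ℝ) else 0) * u l =
          ∑ l, (if xs l i = -1 then (1 : ℝ) else 0) * u l) :=
  stmt10_general n m i xs hxs c
end

section
/- Fix n ≥ 2, a player index i, samples x^{(1)},…,x^{(m)} ∈ {−1,+1}^n, and constants c^{(1)},…,c^{(m)} ≥ 0. Define the logistic training loss ℓ̂(w,b) = (1/m)·∑_l log( c^{(l)} + 1 + exp(−x_i^{(l)}·(wᵀ x_{−i}^{(l)} − b)) ) for w ∈ ℝ^{n−1}, b ∈ ℝ. Then (w,b) = (0,0) is a global minimizer of ℓ̂ if and only if for every j ≠ i, ∑_l 1[x_i^{(l)} x_j^{(l)} = 1]/(c^{(l)}+2) = ∑_l 1[x_i^{(l)} x_j^{(l)} = −1]/(c^{(l)}+2), and ∑_l 1[x_i^{(l)} = 1]/(c^{(l)}+2) = ∑_l 1[x_i^{(l)}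 = −1]/(c^{(l)}+2). -/
open Finset
open scoped Classical BigOperators

/-!
With `a = c + 1 ≥ 0`, the loss is a sum of the convex functions `z ↦ log (a + exp (-z))` composed
with linear forms in `(w, b)`, so `(0, 0)` is a global minimiser iff the gradient there vanishes.
The derivative of `log (a + exp (-z))` at `0` is `-1/(a+1) = -1/(c+2)`, so the gradient's
coordinates are `∑_l x_i x_j / (c+2)` and `-∑_l x_i / (c+2)`; for `±1` entries these vanish exactly
when the weighted counts balance. Sufficiency comes from the tangent-line bound
`log (a + 1) - z / (a+1) ≤ log (a + exp (-z))` (weighted AM–GM), necessity from the derivative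
along each coordinate axis.
-/

/-- The logistic training loss
`ℓ̂(w,b) = (1/m) ∑_l log(c^{(l)} + 1 + exp(−x_i^{(l)}(wᵀ x_{−i}^{(l)} − b)))`, where the
weight vector `w ∈ ℝ^{n−1}` is indexed by the players `j ≠ i`. -/
noncomputable def logisticObj (n m : ℕ) (i : Fin n) (xs : Fin m → Fin n → ℝ) (c : Fin m → ℝ)
    (w : {j : Fin n // j ≠ i} → ℝ) (b : ℝ) : ℝ :=
  (1 / (m : ℝ)) *
    ∑ l, Real.log (c l + 1 +
      Real.exp (-(xs l i * ((∑ j : {j : Fin n // j ≠ i}, w j * xs l (j : Fin n)) - b))))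

open Real

theorem log_add_one_sub_div_le_log_add_exp_neg {a : ℝ} (ha : 0 ≤ a) (z : ℝ) :
    log (a + 1) - z / (a + 1) ≤ log (a + exp (-z)) := by
  have ha1 : 0 < a + 1 := by linarith
  -- convexity of `exp` at `0` and `-z` with weights `a/(a+1)` and `1/(a+1)`
  have hconv := convexOn_exp.2 (Set.mem_univ 0) (Set.mem_univ (-z)) (div_nonneg ha ha1.le)
    (one_div_nonneg.2 ha1.le) (by field_simp)
  simp only [smul_eq_mul, mul_zero, zero_add, exp_zero, mul_one] at hconv
  have hamgm : (a + 1) * exp (-z / (a + 1)) ≤ a + exp (-z) := by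
    calc (a + 1) * exp (-z / (a + 1)) = (a + 1) * exp (1 / (a + 1) * -z) := by ring_nf
      _ ≤ (a + 1) * (a / (a + 1) + 1 / (a + 1) * exp (-z)) := by gcongr
      _ = a + exp (-z) := by field_simp
  have := log_le_log (by positivity) hamgm
  rw [log_mul ha1.ne' (exp_pos _).ne', log_exp, neg_div] at this
  linarith

theorem hasDerivAt_log_add_exp_neg_mul {a : ℝ} (ha : 0 ≤ a) (d : ℝ) :
    HasDerivAt (fun t => log (a + exp (-(t * d)))) (-(d / (a + 1))) 0 := by
  have hpos : a + exp (-(0 * d)) ≠ 0 := by positivity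
  convert ((hasDerivAt_mul_const d).fun_neg.exp.const_add a).log hpos using 1
  simp [neg_div]

section ShiftedLogisticLoss

variable {ι κ : Type*} [Fintype ι] [Fintype κ]

noncomputable def shiftedLogisticLoss (a : ι → ℝ) (φ : ι → κ → ℝ) (θ : κ → ℝ) : ℝ :=
  ∑ l, log (a l + exp (-∑ k, θ k * φ l k))

theorem shiftedLogisticLoss_zero (a : ι → ℝ) (φ : ι → κ → ℝ) :
    shiftedLogisticLoss a φ 0 = ∑ l, log (a l + 1) := by
  simp [shiftedLogisticLoss]

theorem shiftedLogisticLoss_single (a : ι → ℝ) (φ : ι → κ → ℝ) (k : κ) (t : ℝ) :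
    shiftedLogisticLoss a φ (Pi.single k t) = ∑ l, log (a l + exp (-(t * φ l k))) := by
  simp [shiftedLogisticLoss, Pi.single_apply, ite_mul]

theorem shiftedLogisticLoss_zero_sub_le {a : ι → ℝ} (ha : ∀ l, 0 ≤ a l) (φ : ι → κ → ℝ)
    (θ : κ → ℝ) :
    shiftedLogisticLoss a φ 0 - ∑ k, θ k * ∑ l, φ l k / (a l + 1) ≤
      shiftedLogisticLoss a φ θ := by
  have hlin : ∑ k, θ k * ∑ l, φ l k / (a l + 1) = ∑ l, (∑ k, θ k * φ l k) / (a l + 1) := by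
    simp only [mul_sum, sum_div, mul_div_assoc]
    exact sum_comm
  rw [shiftedLogisticLoss_zero, hlin, ← sum_sub_distrib]
  exact sum_le_sum fun l _ => log_add_one_sub_div_le_log_add_exp_neg (ha l) _

theorem forall_shiftedLogisticLoss_zero_le_iff {a : ι → ℝ} (ha : ∀ l, 0 ≤ a l)
    (φ : ι → κ → ℝ) :
    (∀ θ, shiftedLogisticLoss a φ 0 ≤ shiftedLogisticLoss a φ θ) ↔
      ∀ k, ∑ l, φ l k / (a l + 1) = 0 := by
  refine ⟨fun hmin k => ?_, fun hcrit θ => ?_⟩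
  · have hloc : IsLocalMin (fun t => shiftedLogisticLoss a φ (Pi.single k t)) 0 :=
      Filter.Eventually.of_forall fun t => by simpa using hmin (Pi.single k t)
    simp only [shiftedLogisticLoss_single] at hloc
    have hderiv := HasDerivAt.fun_sum fun l (_ : l ∈ univ) =>
      hasDerivAt_log_add_exp_neg_mul (ha l) (φ l k)
    simpa [sum_neg_distrib] using hloc.hasDerivAt_eq_zero hderiv
  · simpa [hcrit] using shiftedLogisticLoss_zero_sub_le ha φ θ

end ShiftedLogisticLoss

theorem sum_sign_div_eq_zero_iff {ι : Type*} [Fintype ι] {d : ι → ℝ}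
    (hd : ∀ l, d l = 1 ∨ d l = -1) (e : ι → ℝ) :
    ∑ l, d l / e l = 0 ↔
      ∑ l, (if d l = 1 then (1 : ℝ) else 0) / e l = ∑ l, (if d l = -1 then (1 : ℝ) else 0) / e l := by
  refine Iff.trans ?_ sub_eq_zero
  rw [← sum_sub_distrib]
  refine Eq.congr_left (sum_congr rfl fun l _ => ?_)
  rcases hd l with h | h <;> norm_num [h, neg_div]

/-- `θ none` plays the role of the bias `b` and `θ (some j)` that of the weight `w j`. -/
def logisticFeatures {n m : ℕ} (xs : Fin m → Fin n → ℝ) (i : Fin n) (l : Fin m) :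
    Option {j : Fin n // j ≠ i} → ℝ
  | none => -xs l i
  | some j => xs l i * xs l j

theorem logisticObj_eq {n m : ℕ} (i : Fin n) (xs : Fin m → Fin n → ℝ) (c : Fin m → ℝ)
    (θ : Option {j : Fin n // j ≠ i} → ℝ) :
    logisticObj n m i xs c (θ ∘ some) (θ none) =
      1 / (m : ℝ) * shiftedLogisticLoss (fun l => c l + 1) (logisticFeatures xs i) θ := by
  unfold logisticObj shiftedLogisticLoss
  congr! with l
  simp only [Fintype.sum_option, logisticFeatures, Function.comp_apply, mul_sub, mul_sum,
    mul_left_comm (xs l i)]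
  ring

theorem forall_logisticObj_zero_le_iff {n m : ℕ} (i : Fin n) (xs : Fin m → Fin n → ℝ)
    (c : Fin m → ℝ) :
    (∀ (w : {j : Fin n // j ≠ i} → ℝ) (b : ℝ),
        logisticObj n m i xs c 0 0 ≤ logisticObj n m i xs c w b) ↔
      ∀ θ, shiftedLogisticLoss (fun l => c l + 1) (logisticFeatures xs i) 0 ≤
        shiftedLogisticLoss (fun l => c l + 1) (logisticFeatures xs i) θ := by
  rcases m.eq_zero_or_pos with rfl | hm
  · simp [logisticObj, shiftedLogisticLoss]
  have hscale (θ : Option {j : Fin n // j ≠ i} → ℝ) :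
      shiftedLogisticLoss (fun l => c l + 1) (logisticFeatures xs i) 0 ≤
          shiftedLogisticLoss (fun l => c l + 1) (logisticFeatures xs i) θ ↔
        logisticObj n m i xs c 0 0 ≤ logisticObj n m i xs c (θ ∘ some) (θ none) := by
    rw [← mul_le_mul_iff_right₀ (by positivity : (0 : ℝ) < 1 / m), ← logisticObj_eq,
      ← logisticObj_eq]
    rfl
  exact ⟨fun h θ => (hscale θ).2 (h _ _), fun h w b => (hscale (Option.elim' b w)).1 (h _)⟩

theorem stmt11_general (n m : ℕ) (i : Fin n)
    (xs : Fin m → Fin n → ℝ) (hxs : ∀ l j, xs l j = 1 ∨ xs l j = -1)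
    (c : Fin m → ℝ) (hc : ∀ l, 0 ≤ c l) :
    (∀ (w : {j : Fin n // j ≠ i} → ℝ) (b : ℝ),
        logisticObj n m i xs c 0 0 ≤ logisticObj n m i xs c w b) ↔
      ((∀ j : Fin n, j ≠ i →
          ∑ l, (if xs l i * xs l j = 1 then (1 : ℝ) else 0) / (c l + 2) =
            ∑ l, (if xs l i * xs l j = -1 then (1 : ℝ) else 0) / (c l + 2)) ∧
        (∑ l, (if xs l i = 1 then (1 : ℝ) else 0) / (c l + 2) =
          ∑ l, (if xs l i = -1 then (1 : ℝ) else 0) / (c l + 2))) := by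
  have hsign (j : Fin n) (l : Fin m) : xs l i * xs l j = 1 ∨ xs l i * xs l j = -1 := by
    rcases hxs l i with h | h <;> rcases hxs l j with h' | h' <;> simp [h, h']
  rw [forall_logisticObj_zero_le_iff,
    forall_shiftedLogisticLoss_zero_le_iff fun l => by linarith [hc l], Option.forall, and_comm,
    Subtype.forall]
  simp only [logisticFeatures, add_assoc, one_add_one_eq_two, neg_div, sum_neg_distrib, neg_eq_zero]
  exact and_congr (forall₂_congr fun j _ => sum_sign_div_eq_zero_iff (hsign j) _)
    (sum_sign_div_eq_zero_iff (hxs · i) _)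

/-- `(w,b) = (0,0)` is a global minimizer of the logistic training loss iff
the weighted agreement/disagreement counts (weights `1/(c^{(l)}+2)`) balance for every
`j ≠ i` and for the bias. -/
theorem stmt11 (n m : ℕ) (hn : 2 ≤ n) (i : Fin n)
    (xs : Fin m → Fin n → ℝ) (hxs : ∀ l j, xs l j = 1 ∨ xs l j = -1)
    (c : Fin m → ℝ) (hc : ∀ l, 0 ≤ c l) :
    (∀ (w : {j : Fin n // j ≠ i} → ℝ) (b : ℝ),
        logisticObj n m i xs c 0 0 ≤ logisticObj n m i xs c w b) ↔
      ((∀ j : Fin n, j ≠ i →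
          ∑ l, (if xs l i * xs l j = 1 then (1 : ℝ) else 0) / (c l + 2) =
            ∑ l, (if xs l i * xs l j = -1 then (1 : ℝ) else 0) / (c l + 2)) ∧
        (∑ l, (if xs l i = 1 then (1 : ℝ) else 0) / (c l + 2) =
          ∑ l, (if xs l i = -1 then (1 : ℝ) else 0) / (c l + 2))) :=
  stmt11_general n m i xs hxs c hc
end

section
/- Let (W,b) be an n-player linear influence game in which player i is non-absolutely-indifferent ((w_i, b_i) ≠ 0) and every player j ≠ i is absolutely indifferent ((w_j, b_j) = 0). Then the true proportion of equilibria satisfies 1/2 ≤ π(W,b) ≤ 3/4. -/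
open Finset
open scoped Classical BigOperators

/-- The set of pure-strategy Nash equilibria of the linear influence game `(W,b)`. -/
noncomputable def ligNE (n : ℕ) (W : Fin n → Fin n → ℝ) (b : Fin n → ℝ) :
    Finset (Fin n → ℝ) :=
  (cube n).filter (fun x => ∀ i, 0 ≤ x i * ((∑ j ∈ Finset.univ.erase i, W i j * x j) - b i))

/-!
Encode a joint action by a Boolean vector `s` and write `g s = ∑_{j ≠ i} w_ij x_j - b_i`, which
does not depend on `s i`. Since every other player's condition reads `0 ≤ 0`, `x` is an
equilibrium iff `0 ≤ x_i g(x)`. Flipping coordinate `i` negates `x_i g(x)`, so the equilibria and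
their mirror images cover the cube and overlap exactly on the zeros of `g`: hence
`2 |NE| = 2^n + |{g = 0}|`. Finally a nonzero affine function vanishes on at most half of the cube,
because flipping a coordinate with nonzero weight moves a zero to a non-zero.
-/

def spin (b : Bool) : ℝ := if b then 1 else -1

lemma spin_not (b : Bool) : spin (!b) = -spin b := by
  cases b <;> simp [spin]

lemma spin_ne_zero (b : Bool) : spin b ≠ 0 := by
  cases b <;> simp [spin]

lemma spin_injective : Function.Injective spin := by
  intro a b h
  cases a <;> cases b <;> norm_num [spin] at h <;> rfl

section FlipAt

variable {ι : Type*} [DecidableEq ι]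

def flipAt (k : ι) : Equiv.Perm (ι → Bool) :=
  Function.Involutive.toPerm (fun s => Function.update s k (!s k)) fun s => by simp

lemma flipAt_apply (k : ι) (s : ι → Bool) : flipAt k s = Function.update s k (!s k) := rfl

lemma flipAt_apply_self (k : ι) (s : ι → Bool) : flipAt k s k = !s k := by
  simp [flipAt_apply]

lemma flipAt_apply_of_ne {k j : ι} (h : j ≠ k) (s : ι → Bool) : flipAt k s j = s j := by
  simp [flipAt_apply, Function.update_of_ne h]

lemma sum_mul_spin_flipAt_of_mem {J : Finset ι} {k : ι} (hk : k ∈ J) (w : ι → ℝ)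
    (s : ι → Bool) :
    ∑ j ∈ J, w j * spin (flipAt k s j) = ∑ j ∈ J, w j * spin (s j) - 2 * w k * spin (s k) := by
  rw [← add_sum_erase J _ hk, ← add_sum_erase J _ hk, flipAt_apply_self, spin_not]
  have hrest : ∑ j ∈ J.erase k, w j * spin (flipAt k s j) = ∑ j ∈ J.erase k, w j * spin (s j) :=
    sum_congr rfl fun j hj => by rw [flipAt_apply_of_ne (ne_of_mem_erase hj)]
  rw [hrest]
  ring

lemma sum_mul_spin_flipAt_of_notMem {J : Finset ι} {k : ι} (hk : k ∉ J) (w : ι → ℝ)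
    (s : ι → Bool) :
    ∑ j ∈ J, w j * spin (flipAt k s j) = ∑ j ∈ J, w j * spin (s j) :=
  sum_congr rfl fun j hj => by rw [flipAt_apply_of_ne (ne_of_mem_of_not_mem hj hk)]

end FlipAt

theorem two_mul_card_filter_nonneg_of_neg {α : Type*} [Fintype α] (τ : α ≃ α) (p : α → ℝ)
    (hp : ∀ a, p (τ a) = -p a) :
    2 * #{a | 0 ≤ p a} = Fintype.card α + #{a | p a = 0} := by
  have hmirror : #{a | 0 ≤ p a} = #{a | p a ≤ 0} := card_equiv τ (by simp [hp])
  have hunion : univ.filter (fun a => 0 ≤ p a) ∪ univ.filter (fun a => p a ≤ 0) = univ := by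
    ext a; simp [le_total]
  have hinter : univ.filter (fun a => 0 ≤ p a) ∩ univ.filter (fun a => p a ≤ 0)
      = univ.filter (fun a => p a = 0) := by
    ext a; simp [le_antisymm_iff, and_comm]
  rw [two_mul]
  nth_rw 2 [hmirror]
  rw [← card_union_add_card_inter, hunion, hinter, card_univ]

theorem two_mul_card_filter_le_of_equiv {α : Type*} [Fintype α] (τ : α ≃ α) (Z : α → Prop)
    [DecidablePred Z] (hZ : ∀ a, Z a → ¬Z (τ a)) :
    2 * #{a | Z a} ≤ Fintype.card α := by
  have hle : #{a | Z a} ≤ #{a | ¬Z a} :=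
    card_le_card_of_injOn τ (fun a ha => by simpa using hZ a (by simpa using ha))
      τ.injective.injOn
  have hsplit := card_filter_add_card_filter_not (s := univ) (fun a => Z a)
  rw [card_univ] at hsplit
  omega

theorem two_mul_card_affine_eq_zero_le {ι : Type*} [Fintype ι] [DecidableEq ι] (J : Finset ι)
    (w : ι → ℝ) (c : ℝ) (h : ¬((∀ j ∈ J, w j = 0) ∧ c = 0)) :
    2 * #{s : ι → Bool | ∑ j ∈ J, w j * spin (s j) - c = 0} ≤ 2 ^ Fintype.card ι := by
  by_cases hw : ∀ j ∈ J, w j = 0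
  · have hc : c ≠ 0 := fun hc => h ⟨hw, hc⟩
    have hsum (s : ι → Bool) : ∑ j ∈ J, w j * spin (s j) = 0 :=
      sum_eq_zero fun j hj => by rw [hw j hj, zero_mul]
    simp [hsum, hc]
  · push Not at hw
    obtain ⟨k, hk, hwk⟩ := hw
    have h := two_mul_card_filter_le_of_equiv (flipAt k)
      (fun s : ι → Bool => ∑ j ∈ J, w j * spin (s j) - c = 0) fun s hs => by
        rw [sum_mul_spin_flipAt_of_mem hk]
        have := mul_ne_zero (mul_ne_zero two_ne_zero hwk) (spin_ne_zero (s k))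
        contrapose! this
        linarith
    simpa using h

section LinearInfluenceGame

variable {n : ℕ} (W : Fin n → Fin n → ℝ) (b : Fin n → ℝ) (i : Fin n)

lemma spin_comp_injective :
    Function.Injective fun (s : Fin n → Bool) (j : Fin n) => spin (s j) :=
  fun _ _ h => funext fun j => spin_injective (congrFun h j)

lemma card_ligNE_eq_of_indifferent (hj : ∀ j, j ≠ i → (∀ k, W j k = 0) ∧ b j = 0) :
    #(ligNE n W b) =
      #{s : Fin n → Bool | 0 ≤ spin (s i) * (∑ j ∈ univ.erase i, W i j * spin (s j) - b i)} := by
  rw [ligNE, cube, filter_image]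
  refine (card_image_of_injective _ spin_comp_injective).trans <|
    congrArg card (filter_congr fun s _ => ⟨fun h => h i, fun h i' => ?_⟩)
  by_cases hi' : i' = i
  · subst hi'; exact h
  · obtain ⟨hW, hb⟩ := hj i' hi'
    simp [hW, hb]

theorem two_mul_card_ligNE_of_indifferent (hj : ∀ j, j ≠ i → (∀ k, W j k = 0) ∧ b j = 0) :
    2 * #(ligNE n W b) =
      2 ^ n + #{s : Fin n → Bool | ∑ j ∈ univ.erase i, W i j * spin (s j) - b i = 0} := by
  rw [card_ligNE_eq_of_indifferent W b i hj, two_mul_card_filter_nonneg_of_neg (flipAt i)]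
  · simp [spin_ne_zero]
  · intro s
    rw [flipAt_apply_self, spin_not, sum_mul_spin_flipAt_of_notMem (notMem_erase i univ)]
    ring

end LinearInfluenceGame

theorem stmt14_general (n : ℕ) (W : Fin n → Fin n → ℝ) (b : Fin n → ℝ)
    (i : Fin n)
    (hi : ¬((∀ j, j ≠ i → W i j = 0) ∧ b i = 0))
    (hj : ∀ j, j ≠ i → (∀ k, W j k = 0) ∧ b j = 0) :
    (1 / 2 : ℝ) ≤ ((ligNE n W b).card : ℝ) / 2 ^ n ∧
      ((ligNE n W b).card : ℝ) / 2 ^ n ≤ 3 / 4 := by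
  set zeros := #{s : Fin n → Bool | ∑ j ∈ univ.erase i, W i j * spin (s j) - b i = 0}
  have hcount : (2 * #(ligNE n W b) : ℝ) = 2 ^ n + zeros := by
    exact_mod_cast two_mul_card_ligNE_of_indifferent W b i hj
  have hzeros : (2 * zeros : ℝ) ≤ 2 ^ n := by
    have h := two_mul_card_affine_eq_zero_le (univ.erase i) (W i) (b i) (by simpa using hi)
    rw [Fintype.card_fin] at h
    exact_mod_cast h
  have hpos : (0 : ℝ) < 2 ^ n := by positivity
  constructor
  · rw [le_div_iff₀ hpos]
    linarith [zeros.cast_nonneg (α := ℝ)]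
  · rw [div_le_iff₀ hpos]
    linarith

/-- in a linear influence game where player `i` is non-absolutely-indifferent
and all other players are absolutely indifferent, the true proportion of equilibria
`π(W,b) = |NE(W,b)|/2^n` satisfies `1/2 ≤ π(W,b) ≤ 3/4`. -/
theorem stmt14 (n : ℕ) (W : Fin n → Fin n → ℝ) (b : Fin n → ℝ)
    (hdiag : ∀ i, W i i = 0) (i : Fin n)
    (hi : ¬((∀ j, j ≠ i → W i j = 0) ∧ b i = 0))
    (hj : ∀ j, j ≠ i → (∀ k, W j k = 0) ∧ b j = 0) :
    (1 / 2 : ℝ) ≤ ((ligNE n W b).card : ℝ) / 2 ^ n ∧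
      ((ligNE n W b).card : ℝ) / 2 ^ n ≤ 3 / 4 :=
  stmt14_general n W b i hi hj
end
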